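/- arXiv:0707.2822 — 3 statements merged into one kernel-verified Lean document; each statement's English description precedes it below -/
import Mathlib

section
/- In the group G(r,1,2) = ⟨s, t ∣ s² = t^r = 1, stst = tsts⟩, the elements 1, s, and st^a s for 1 ≤ a ≤ r−1 form a complete set of representatives of the double cosets of the cyclic subgroup ⟨t⟩ in G(r,1,2). -/
def Grels (r : ℕ) : Set (FreeGroup (Fin 2)) :=
  { (FreeGroup.of 0) ^ 2, (FreeGroup.of 1) ^ r,
    (FreeGroup.of 0 * FreeGroup.of 1 * FreeGroup.of 0 * FreeGroup.of 1) *
      (FreeGroup.of 1 * FreeGroup.of 0 * FreeGroup.of 1 * FreeGroup.of 0)⁻¹ }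

abbrev Gr12 (r : ℕ) : Type := PresentedGroup (Grels r)

def s (r : ℕ) : Gr12 r := PresentedGroup.of 0
def t (r : ℕ) : Gr12 r := PresentedGroup.of 1

/-- The ⟨t⟩-⟨t⟩ double coset of d in G(r,1,2). -/
def tDoubleCoset (r : ℕ) (d : Gr12 r) : Set (Gr12 r) :=
  {x : Gr12 r | ∃ i j : ℕ, x = t r ^ i * d * t r ^ j}

lemma mk_rel {r : ℕ} {w : FreeGroup (Fin 2)} (hw : w ∈ Grels r) :
    PresentedGroup.mk (Grels r) w = 1 := by
  exact (QuotientGroup.eq_one_iff w).2 (Subgroup.subset_normalClosure hw)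

lemma rel_s (r : ℕ) : s r * s r = 1 := by
  have := mk_rel (r := r) (w := (FreeGroup.of 0) ^ 2) (Or.inl rfl)
  simp only [pow_two, map_mul] at this
  exact this

lemma rel_t (r : ℕ) : t r ^ r = 1 := by
  have := mk_rel (r := r) (w := (FreeGroup.of 1) ^ r) (Or.inr (Or.inl rfl))
  simp only [map_pow] at this
  exact this

lemma rel_braid (r : ℕ) :
    s r * t r * s r * t r = t r * s r * t r * s r := by
  have := mk_rel (r := r)
    (w := (FreeGroup.of 0 * FreeGroup.of 1 * FreeGroup.of 0 * FreeGroup.of 1) *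
      (FreeGroup.of 1 * FreeGroup.of 0 * FreeGroup.of 1 * FreeGroup.of 0)⁻¹)
    (Or.inr (Or.inr rfl))
  simp only [map_mul, map_inv] at this
  rw [mul_inv_eq_one] at this
  exact this

def Sperm (r : ℕ) : Equiv.Perm (Fin 2 × ZMod r) :=
  Equiv.prodCongr (Equiv.swap 0 1) (Equiv.refl _)

def Tperm (r : ℕ) : Equiv.Perm (Fin 2 × ZMod r) :=
  Equiv.prodShear (Equiv.refl (Fin 2))
    (fun k => if k = 0 then Equiv.addRight (1 : ZMod r) else Equiv.refl _)

lemma Sperm_apply (r : ℕ) (k : Fin 2) (x : ZMod r) :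
    Sperm r (k, x) = (Equiv.swap 0 1 k, x) := rfl

lemma Tperm_apply (r : ℕ) (k : Fin 2) (x : ZMod r) :
    Tperm r (k, x) = (k, if k = 0 then x + 1 else x) := by
  simp only [Tperm, Equiv.prodShear, Equiv.coe_fn_mk, Equiv.refl_apply]
  split <;> rfl

lemma Tperm_pow (r n : ℕ) (k : Fin 2) (x : ZMod r) :
    (Tperm r ^ n) (k, x) = (k, if k = 0 then x + n else x) := by
  induction n with
  | zero => simp
  | succ n ih =>
    rw [pow_succ', Equiv.Perm.mul_apply, ih, Tperm_apply]
    by_cases h : k = 0 <;> simp [h] <;> push_cast <;> ring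

lemma Sperm_sq (r : ℕ) : Sperm r * Sperm r = 1 := by
  apply Equiv.ext
  rintro ⟨k, x⟩
  simp [Equiv.Perm.mul_apply, Sperm_apply]

lemma Tperm_pow_r (r : ℕ) : Tperm r ^ r = 1 := by
  apply Equiv.ext
  rintro ⟨k, x⟩
  simp [Tperm_pow, ZMod.natCast_self]

lemma braid_perm (r : ℕ) :
    Sperm r * Tperm r * Sperm r * Tperm r = Tperm r * Sperm r * Tperm r * Sperm r := by
  apply Equiv.ext
  rintro ⟨k, x⟩
  fin_cases k <;>
    simp [Equiv.Perm.mul_apply, Sperm_apply, Tperm_apply, Equiv.swap_apply_def]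

def fgen (r : ℕ) : Fin 2 → Equiv.Perm (Fin 2 × ZMod r) := ![Sperm r, Tperm r]

lemma frels (r : ℕ) : ∀ w ∈ Grels r, FreeGroup.lift (fgen r) w = 1 := by
  intro w hw
  rcases hw with h | h | h <;> subst h
  · rw [map_pow, FreeGroup.lift_apply_of]
    show fgen r 0 ^ 2 = 1
    rw [pow_two]
    simpa [fgen] using Sperm_sq r
  · rw [map_pow, FreeGroup.lift_apply_of]
    simpa [fgen] using Tperm_pow_r r
  · rw [map_mul, map_inv, mul_inv_eq_one]
    simp only [map_mul, FreeGroup.lift_apply_of, fgen, Matrix.cons_val_zero, Matrix.cons_val_one,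
      Matrix.head_cons]
    exact braid_perm r

noncomputable def phi (r : ℕ) : Gr12 r →* Equiv.Perm (Fin 2 × ZMod r) :=
  PresentedGroup.toGroup (frels r)

lemma phi_s (r : ℕ) : phi r (s r) = Sperm r :=
  (PresentedGroup.toGroup.of (frels r) (x := 0)).trans (by simp [fgen])

lemma phi_t (r : ℕ) : phi r (t r) = Tperm r :=
  (PresentedGroup.toGroup.of (frels r) (x := 1)).trans (by simp [fgen])

-- Evaluation of φ on the three shapes of double-coset elements
lemma eval_one (r : ℕ) (i j : ℕ) :
    phi r (t r ^ i * 1 * t r ^ j) (1, 0) = (1, 0) ∧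
    (phi r (t r ^ i * 1 * t r ^ j) (0, 0)).1 = 0 := by
  simp only [mul_one, ← pow_add, map_pow, phi_t, Tperm_pow]
  norm_num

lemma eval_s (r : ℕ) (i j : ℕ) :
    (phi r (t r ^ i * s r * t r ^ j) (0, 0)).1 = 1 := by
  simp only [map_mul, map_pow, phi_t, phi_s, Equiv.Perm.mul_apply, Tperm_pow,
    Sperm_apply]
  norm_num [Tperm_pow]

lemma eval_sts (r : ℕ) (a i j : ℕ) :
    phi r (t r ^ i * (s r * t r ^ a * s r) * t r ^ j) (1, 0) = (1, (a : ZMod r)) ∧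
    (phi r (t r ^ i * (s r * t r ^ a * s r) * t r ^ j) (0, 0)).1 = 0 := by
  simp only [map_mul, map_pow, phi_t, phi_s, Equiv.Perm.mul_apply, Tperm_pow,
    Sperm_apply]
  norm_num [Tperm_pow, Equiv.swap_apply_def]

-- algebraic lemmas in Gr12
lemma s_inv (r : ℕ) : (s r)⁻¹ = s r := by
  rw [inv_eq_iff_mul_eq_one, rel_s]

lemma t_pow_mod (r : ℕ) (hr : 1 ≤ r) (i : ℕ) : t r ^ i = t r ^ (i % r) := by
  conv_lhs => rw [← Nat.mod_add_div i r]
  rw [pow_add, pow_mul, rel_t, one_pow, mul_one]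

lemma sts_comm_t (r : ℕ) (n : ℕ) :
    (s r * t r ^ n * s r) * t r = t r * (s r * t r ^ n * s r) := by
  induction n with
  | zero => simp [rel_s]
  | succ n ih =>
    have hss := rel_s r
    have h2 : (s r * t r * s r) * t r = t r * (s r * t r * s r) := by
      have hb := rel_braid r
      calc (s r * t r * s r) * t r = s r * t r * s r * t r := by group
        _ = t r * s r * t r * s r := hb
        _ = t r * (s r * t r * s r) := by group
    have h1 : s r * t r ^ (n + 1) * s r
        = (s r * t r ^ n * s r) * (s r * t r * s r) := by
      rw [pow_succ]
      rw [show (s r * t r ^ n * s r) * (s r * t r * s r)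
          = s r * t r ^ n * (s r * s r * (t r * s r)) by group]
      rw [hss, one_mul]
      group
    rw [h1, mul_assoc, h2, ← mul_assoc, ih]
    group

lemma sts_comm_t_pow (r : ℕ) (n m : ℕ) :
    (s r * t r ^ n * s r) * t r ^ m = t r ^ m * (s r * t r ^ n * s r) := by
  induction m with
  | zero => simp
  | succ m ih =>
    rw [pow_succ, ← mul_assoc, ih, mul_assoc, sts_comm_t, ← mul_assoc, ← mul_assoc, ← pow_succ]

def Reps (r : ℕ) (d : Gr12 r) : Prop :=
  d = 1 ∨ d = s r ∨ ∃ a : ℕ, 1 ≤ a ∧ a ≤ r - 1 ∧ d = s r * t r ^ a * s r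

lemma t_inv (r : ℕ) (hr : 1 ≤ r) : (t r)⁻¹ = t r ^ (r - 1) := by
  apply inv_eq_of_mul_eq_one_left
  rw [← pow_succ, show r - 1 + 1 = r by omega, rel_t]

lemma step_t (r : ℕ) {g : Gr12 r}
    (h : ∃ d, Reps r d ∧ g ∈ tDoubleCoset r d) :
    ∃ d, Reps r d ∧ (t r * g) ∈ tDoubleCoset r d := by
  obtain ⟨d, hd, i, j, rfl⟩ := h
  exact ⟨d, hd, i + 1, j, by rw [pow_succ']; group⟩

lemma step_t_pow (r : ℕ) (n : ℕ) {g : Gr12 r}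
    (h : ∃ d, Reps r d ∧ g ∈ tDoubleCoset r d) :
    ∃ d, Reps r d ∧ (t r ^ n * g) ∈ tDoubleCoset r d := by
  induction n with
  | zero => simpa using h
  | succ n ih =>
    have := step_t r ih
    rw [← mul_assoc, ← pow_succ'] at this
    exact this

lemma step_s (r : ℕ) (hr : 1 ≤ r) {g : Gr12 r}
    (h : ∃ d, Reps r d ∧ g ∈ tDoubleCoset r d) :
    ∃ d, Reps r d ∧ (s r * g) ∈ tDoubleCoset r d := by
  obtain ⟨d, hd, i, j, rfl⟩ := h
  rcases hd with rfl | rfl | ⟨a, ha1, ha2, rfl⟩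
  · exact ⟨s r, Or.inr (Or.inl rfl), 0, i + j, by group⟩
  · have hti : t r ^ i = t r ^ (i % r) := t_pow_mod r hr i
    by_cases h0 : i % r = 0
    · refine ⟨1, Or.inl rfl, 0, j, ?_⟩
      calc s r * (t r ^ i * s r * t r ^ j)
          = s r * (t r ^ (i % r) * s r * t r ^ j) := by rw [hti]
        _ = s r * s r * t r ^ j := by rw [h0, pow_zero, one_mul]; group
        _ = t r ^ 0 * 1 * t r ^ j := by rw [rel_s]; group
    · have ha1 : 1 ≤ i % r := Nat.one_le_iff_ne_zero.2 h0
      have ha2 : i % r ≤ r - 1 := by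
        have := Nat.mod_lt i (show 0 < r by omega); omega
      refine ⟨s r * t r ^ (i % r) * s r, Or.inr (Or.inr ⟨i % r, ha1, ha2, rfl⟩), 0, j, ?_⟩
      calc s r * (t r ^ i * s r * t r ^ j)
          = s r * (t r ^ (i % r) * s r * t r ^ j) := by rw [hti]
        _ = t r ^ 0 * (s r * t r ^ (i % r) * s r) * t r ^ j := by group
  · refine ⟨s r, Or.inr (Or.inl rfl), a, i + j, ?_⟩
    calc s r * (t r ^ i * (s r * t r ^ a * s r) * t r ^ j)
        = ((s r * t r ^ i * s r) * t r ^ a) * (s r * t r ^ j) := by group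
      _ = (t r ^ a * (s r * t r ^ i * s r)) * (s r * t r ^ j) := by rw [sts_comm_t_pow]
      _ = t r ^ a * s r * t r ^ i * (s r * s r) * t r ^ j := by group
      _ = t r ^ a * s r * t r ^ (i + j) := by rw [rel_s]; group

lemma exists_rep (r : ℕ) (hr : 1 ≤ r) (g : Gr12 r) :
    ∃ d, Reps r d ∧ g ∈ tDoubleCoset r d := by
  have hg : g ∈ Subgroup.closure (Set.range (PresentedGroup.of : Fin 2 → Gr12 r)) := by
    rw [PresentedGroup.closure_range_of]; exact Subgroup.mem_top g
  refine Subgroup.closure_induction_left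
    (p := fun x _ => ∃ d, Reps r d ∧ x ∈ tDoubleCoset r d) ?_ ?_ ?_ hg
  · exact ⟨1, Or.inl rfl, 0, 0, by simp⟩
  · rintro x ⟨k, rfl⟩ y _ hy
    fin_cases k
    · exact step_s r hr hy
    · exact step_t r hy
  · rintro x ⟨k, rfl⟩ y _ hy
    fin_cases k
    · have h1 : (PresentedGroup.of ((fun i => i) (⟨0, by omega⟩ : Fin 2)) : Gr12 r)⁻¹ = s r := by
        have : (PresentedGroup.of ((fun i => i) (⟨0, by omega⟩ : Fin 2)) : Gr12 r) = s r := rfl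
        rw [this, s_inv]
      rw [h1]
      exact step_s r hr hy
    · have h1 : (PresentedGroup.of ((fun i => i) (⟨1, by omega⟩ : Fin 2)) : Gr12 r)⁻¹
          = t r ^ (r - 1) := by
        have : (PresentedGroup.of ((fun i => i) (⟨1, by omega⟩ : Fin 2)) : Gr12 r) = t r := rfl
        rw [this, t_inv r hr]
      rw [h1]
      exact step_t_pow r (r - 1) hy

lemma natCast_ne_zero (r : ℕ) (hr : 1 ≤ r) {a : ℕ} (ha1 : 1 ≤ a) (ha2 : a ≤ r - 1) :
    (a : ZMod r) ≠ 0 := by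
  intro h
  rw [ZMod.natCast_eq_zero_iff] at h
  have := Nat.le_of_dvd (by omega) h
  omega

lemma reps_unique (r : ℕ) (hr : 1 ≤ r) {g d₁ d₂ : Gr12 r}
    (h₁ : Reps r d₁) (h₂ : Reps r d₂)
    (m₁ : g ∈ tDoubleCoset r d₁) (m₂ : g ∈ tDoubleCoset r d₂) : d₁ = d₂ := by
  obtain ⟨i, j, hg1⟩ := m₁
  obtain ⟨k, l, hg2⟩ := m₂
  rcases h₁ with rfl | rfl | ⟨a, ha1, ha2, rfl⟩ <;>
    rcases h₂ with rfl | rfl | ⟨b, hb1, hb2, rfl⟩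
  · rfl
  · -- 1 vs s
    have e1 := (eval_one r i j).2
    have e2 := eval_s r k l
    rw [← hg1] at e1; rw [← hg2] at e2
    exact absurd (e1.symm.trans e2) (by decide)
  · -- 1 vs sts
    have e1 := (eval_one r i j).1
    have e2 := (eval_sts r b k l).1
    rw [← hg1] at e1; rw [← hg2] at e2
    have := congrArg Prod.snd (e1.symm.trans e2)
    exact absurd this.symm (natCast_ne_zero r hr hb1 hb2)
  · -- s vs 1
    have e1 := eval_s r i j
    have e2 := (eval_one r k l).2
    rw [← hg1] at e1; rw [← hg2] at e2
    exact absurd (e2.symm.trans e1) (by decide)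
  · rfl
  · -- s vs sts
    have e1 := eval_s r i j
    have e2 := (eval_sts r b k l).2
    rw [← hg1] at e1; rw [← hg2] at e2
    exact absurd (e2.symm.trans e1) (by decide)
  · -- sts vs 1
    have e1 := (eval_sts r a i j).1
    have e2 := (eval_one r k l).1
    rw [← hg1] at e1; rw [← hg2] at e2
    have := congrArg Prod.snd (e2.symm.trans e1)
    exact absurd this.symm (natCast_ne_zero r hr ha1 ha2)
  · -- sts vs s
    have e1 := (eval_sts r a i j).2
    have e2 := eval_s r k l
    rw [← hg1] at e1; rw [← hg2] at e2
    exact absurd (e1.symm.trans e2) (by decide)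
  · -- sts vs sts
    have e1 := (eval_sts r a i j).1
    have e2 := (eval_sts r b k l).1
    rw [← hg1] at e1; rw [← hg2] at e2
    have hab : (a : ZMod r) = (b : ZMod r) := congrArg Prod.snd (e1.symm.trans e2)
    haveI : NeZero r := ⟨by omega⟩
    have : a = b := by
      have h := congrArg ZMod.val hab
      rwa [ZMod.val_cast_of_lt (by omega), ZMod.val_cast_of_lt (by omega)] at h
    rw [this]

/-- The elements 1, s, and s tᵃ s (1 ≤ a ≤ r−1) form a complete set of
representatives of the ⟨t⟩-⟨t⟩ double cosets in G(r,1,2). -/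
theorem tDoubleCoset_reps (r : ℕ) (hr : 1 ≤ r) (g : Gr12 r) :
    ∃! d : Gr12 r,
      (d = 1 ∨ d = s r ∨ ∃ a : ℕ, 1 ≤ a ∧ a ≤ r - 1 ∧ d = s r * t r ^ a * s r) ∧
      g ∈ tDoubleCoset r d := by
  obtain ⟨d, hd, hmem⟩ := exists_rep r hr g
  refine ⟨d, ⟨hd, hmem⟩, ?_⟩
  rintro y ⟨hy, hymem⟩
  exact reps_unique r hr hy hd hymem hmem
end

section
/- In the group G(r,1,2) = ⟨s, t ∣ s² = t^r = 1, stst = tsts⟩, the elements 1, t^a for 1 ≤ a ≤ r−1, and t^a s t^b for 1 ≤ b ≤ a ≤ r−1 form a complete set of representatives of the double cosets of the subgroup ⟨s⟩ = {1, s}. -/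
/-- The ⟨s⟩-⟨s⟩ double coset of d in G(r,1,2). -/
def sDoubleCoset (r : ℕ) (d : Gr12 r) : Set (Gr12 r) :=
  {x : Gr12 r | ∃ i j : ℕ, x = s r ^ i * d * s r ^ j}

namespace Gr12Aux

/-! ### A concrete model of G(r,1,2): (ZMod r × ZMod r) ⋊ Z/2 -/

abbrev V (r : ℕ) := ZMod r × ZMod r

def M (r : ℕ) := (ZMod r × ZMod r) × Bool

namespace M

variable {r : ℕ}

def act (e : Bool) (w : V r) : V r := if e then w.swap else w

instance : Mul (M r) := ⟨fun x y => (x.1 + act x.2 y.1, xor x.2 y.2)⟩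
instance : One (M r) := ⟨((0, 0), false)⟩
instance : Inv (M r) := ⟨fun x => (-(act x.2 x.1), x.2)⟩

@[simp] lemma mul_fst (x y : M r) : (x * y).1 = x.1 + act x.2 y.1 := rfl
@[simp] lemma mul_snd (x y : M r) : (x * y).2 = xor x.2 y.2 := rfl
@[simp] lemma mul_fst' (x y : (ZMod r × ZMod r) × Bool) :
    (@HMul.hMul (M r) (M r) (M r) _ x y).1 = x.1 + act x.2 y.1 := rfl
@[simp] lemma mul_snd' (x y : (ZMod r × ZMod r) × Bool) :
    (@HMul.hMul (M r) (M r) (M r) _ x y).2 = xor x.2 y.2 := rfl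
@[simp] lemma mul_fst_l (x : M r) (y : (ZMod r × ZMod r) × Bool) :
    (@HMul.hMul (M r) (M r) (M r) _ x y).1 = x.1 + act x.2 y.1 := rfl
@[simp] lemma mul_snd_l (x : M r) (y : (ZMod r × ZMod r) × Bool) :
    (@HMul.hMul (M r) (M r) (M r) _ x y).2 = xor x.2 y.2 := rfl
@[simp] lemma mul_fst_r (x : (ZMod r × ZMod r) × Bool) (y : M r) :
    (@HMul.hMul (M r) (M r) (M r) _ x y).1 = x.1 + act x.2 y.1 := rfl
@[simp] lemma mul_snd_r (x : (ZMod r × ZMod r) × Bool) (y : M r) :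
    (@HMul.hMul (M r) (M r) (M r) _ x y).2 = xor x.2 y.2 := rfl
attribute [local simp] Prod.mk_zero_zero
@[simp] lemma one_fst : (1 : M r).1 = 0 := rfl
@[simp] lemma one_snd : (1 : M r).2 = false := rfl
@[simp] lemma inv_fst (x : M r) : (x⁻¹).1 = -(act x.2 x.1) := rfl
@[simp] lemma inv_snd (x : M r) : (x⁻¹).2 = x.2 := rfl

@[simp] lemma act_false (w : V r) : act false w = w := rfl
@[simp] lemma act_true (w : V r) : act true w = w.swap := rfl
@[simp] lemma act_zero (e : Bool) : act e (0 : V r) = 0 := by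
  cases e <;> simp [act]
@[simp] lemma act_add (e : Bool) (w u : V r) : act e (w + u) = act e w + act e u := by
  cases e <;> simp [act, Prod.ext_iff]
@[simp] lemma act_act (e f : Bool) (w : V r) : act e (act f w) = act (xor e f) w := by
  cases e <;> cases f <;> simp [act]

protected lemma ext {x y : M r} (h1 : x.1 = y.1) (h2 : x.2 = y.2) : x = y :=
  Prod.ext h1 h2

instance : Group (M r) where
  mul_assoc a b c := by
    apply M.ext
    · simp [add_assoc]
    · simp [Bool.xor_assoc]
  one_mul a := by apply M.ext <;> simp
  mul_one a := by apply M.ext <;> simp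
  inv_mul_cancel a := by apply M.ext <;> simp

def σ : M r := ((0, 0), true)
def τ : M r := (((1 : ZMod r), 0), false)

lemma σ_mul_σ : (σ : M r) * σ = 1 := by
  apply M.ext <;> simp [σ]

lemma σ_pow (i : ℕ) : (σ : M r) ^ i = 1 ∨ (σ : M r) ^ i = σ := by
  induction i with
  | zero => left; rfl
  | succ n ih =>
    rcases ih with h | h
    · right; rw [pow_succ, h, one_mul]
    · left; rw [pow_succ, h, σ_mul_σ]

lemma τ_pow (n : ℕ) : (τ : M r) ^ n = (((n : ZMod r), 0), false) := by
  induction n with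
  | zero => apply M.ext <;> simp
  | succ n ih =>
    rw [pow_succ, ih]
    apply M.ext <;> simp [τ, Prod.ext_iff]

def fgen : Fin 2 → M r := ![σ, τ]

lemma hrels : ∀ w ∈ Grels r, FreeGroup.lift (fgen (r := r)) w = 1 := by
  intro w hw
  simp only [Grels, Set.mem_insert_iff, Set.mem_singleton_iff] at hw
  rcases hw with rfl | rfl | rfl
  · rw [map_pow, FreeGroup.lift_apply_of]
    show (fgen 0 : M r) ^ 2 = 1
    rw [pow_two]
    exact σ_mul_σ
  · rw [map_pow, FreeGroup.lift_apply_of]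
    show (fgen 1 : M r) ^ r = 1
    show (τ : M r) ^ r = 1
    rw [τ_pow]
    apply M.ext <;> simp [ZMod.natCast_self]
  · rw [map_mul, map_inv, mul_inv_eq_one]
    simp only [map_mul, FreeGroup.lift_apply_of]
    show σ * τ * σ * τ = τ * σ * τ * σ
    apply M.ext <;> simp [σ, τ, Prod.ext_iff]

/-- The evaluation homomorphism to the concrete model. -/
def π : Gr12 r →* M r := PresentedGroup.toGroup hrels

@[simp] lemma π_s : (π : Gr12 r →* M r) (s r) = σ := PresentedGroup.toGroup.of hrels
@[simp] lemma π_t : (π : Gr12 r →* M r) (t r) = τ := PresentedGroup.toGroup.of hrels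

lemma π_tpow (a : ℕ) : (π : Gr12 r →* M r) (t r ^ a) = (((a : ZMod r), 0), false) := by
  rw [map_pow, π_t, τ_pow]

lemma π_tst (a b : ℕ) :
    (π : Gr12 r →* M r) (t r ^ a * s r * t r ^ b) = (((a : ZMod r), (b : ZMod r)), true) := by
  rw [map_mul, map_mul, π_s, π_tpow, π_tpow]
  apply M.ext <;> simp [σ, Prod.ext_iff]

lemma fst_conj (i j : ℕ) (m : M r) :
    ((σ ^ i * m * σ ^ j : M r)).1 = m.1 ∨ ((σ ^ i * m * σ ^ j : M r)).1 = m.1.swap := by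
  rcases σ_pow (r := r) i with h | h <;> rcases σ_pow (r := r) j with h' | h' <;>
    rw [h, h']
  · left; simp
  · left; simp [σ]
  · right; simp [σ]
  · right; simp [σ]

end M

/-! ### Relations in the presented group -/

open M

variable {r : ℕ}

lemma mk_rel {w : FreeGroup (Fin 2)} (h : w ∈ Grels r) :
    PresentedGroup.mk (Grels r) w = 1 :=
  (QuotientGroup.eq_one_iff _).mpr (Subgroup.subset_normalClosure h)

lemma s_mul_s : s r * s r = 1 := by
  have h := mk_rel (r := r) (w := (FreeGroup.of 0) ^ 2) (by left; rfl)
  rw [map_pow, pow_two] at h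
  exact h

lemma t_pow_r : t r ^ r = 1 := by
  have h := mk_rel (r := r) (w := (FreeGroup.of 1) ^ r) (by right; left; rfl)
  rw [map_pow] at h
  exact h

lemma braid : s r * t r * s r * t r = t r * s r * t r * s r := by
  have h := mk_rel (r := r)
    (w := (FreeGroup.of 0 * FreeGroup.of 1 * FreeGroup.of 0 * FreeGroup.of 1) *
      (FreeGroup.of 1 * FreeGroup.of 0 * FreeGroup.of 1 * FreeGroup.of 0)⁻¹)
    (by right; right; rfl)
  rw [map_mul, map_inv, mul_inv_eq_one] at h
  simp only [map_mul] at h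
  exact h

lemma s_inv : (s r)⁻¹ = s r := inv_eq_of_mul_eq_one_right s_mul_s

lemma s_pow (i : ℕ) : s r ^ i = 1 ∨ s r ^ i = s r := by
  induction i with
  | zero => left; rfl
  | succ n ih =>
    rcases ih with h | h
    · right; rw [pow_succ, h, one_mul]
    · left; rw [pow_succ, h, s_mul_s]

lemma sts_comm : Commute (s r * t r * s r) (t r) := by
  show (s r * t r * s r) * t r = t r * (s r * t r * s r)
  rw [show t r * (s r * t r * s r) = t r * s r * t r * s r by group]
  exact braid

lemma s_tpow_s (b : ℕ) : s r * t r ^ b * s r = (s r * t r * s r) ^ b := by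
  induction b with
  | zero => rw [pow_zero, pow_zero, mul_one, s_mul_s]
  | succ n ih =>
    have e1 : s r * t r ^ (n + 1) * s r = (s r * t r ^ n * s r) * (s r * t r * s r) := by
      have h2 : (s r * t r ^ n * s r) * (s r * t r * s r)
          = s r * t r ^ n * (s r * s r) * t r * s r := by group
      rw [h2, s_mul_s, mul_one, pow_succ]
      group
    rw [e1, ih, ← pow_succ]

lemma identA (a b : ℕ) :
    s r * t r ^ a * s r * t r ^ b * s r = t r ^ b * s r * t r ^ a := by
  have h1 : s r * t r ^ a * s r = (s r * t r * s r) ^ a := s_tpow_s a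
  have h2 : (s r * t r * s r) ^ a * t r ^ b = t r ^ b * (s r * t r * s r) ^ a :=
    ((sts_comm).pow_pow a b)
  calc s r * t r ^ a * s r * t r ^ b * s r
      = (s r * t r * s r) ^ a * t r ^ b * s r := by rw [← h1]
    _ = t r ^ b * (s r * t r * s r) ^ a * s r := by rw [h2]
    _ = t r ^ b * (s r * t r ^ a * s r) * s r := by rw [h1]
    _ = t r ^ b * s r * t r ^ a * (s r * s r) := by group
    _ = t r ^ b * s r * t r ^ a := by rw [s_mul_s, mul_one]

lemma identB (a b : ℕ) :
    t r ^ a * s r * t r ^ b * s r * t r = t r ^ (a + 1) * s r * t r ^ b * s r := by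
  have h1 : s r * t r ^ b * s r = (s r * t r * s r) ^ b := s_tpow_s b
  have h2 : (s r * t r * s r) ^ b * t r = t r * (s r * t r * s r) ^ b :=
    (sts_comm).pow_left b
  calc t r ^ a * s r * t r ^ b * s r * t r
      = t r ^ a * ((s r * t r ^ b * s r) * t r) := by group
    _ = t r ^ a * ((s r * t r * s r) ^ b * t r) := by rw [h1]
    _ = t r ^ a * (t r * (s r * t r * s r) ^ b) := by rw [h2]
    _ = t r ^ a * (t r * (s r * t r ^ b * s r)) := by rw [h1]
    _ = t r ^ (a + 1) * s r * t r ^ b * s r := by rw [pow_succ]; group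

/-! ### The representative predicate and existence -/

def RepP (r : ℕ) (d : Gr12 r) : Prop :=
  d = 1 ∨ (∃ a : ℕ, 1 ≤ a ∧ a ≤ r - 1 ∧ d = t r ^ a) ∨
    (∃ a b : ℕ, 1 ≤ b ∧ b ≤ a ∧ a ≤ r - 1 ∧ d = t r ^ a * s r * t r ^ b)

def S (r : ℕ) : Set (Gr12 r) := {g | ∃ d, RepP r d ∧ g ∈ sDoubleCoset r d}

lemma one_mem_S : (1 : Gr12 r) ∈ S r :=
  ⟨1, Or.inl rfl, 0, 0, by simp⟩

lemma mul_s_S {g : Gr12 r} (hg : g ∈ S r) : g * s r ∈ S r := by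
  obtain ⟨d, hd, p, q, rfl⟩ := hg
  exact ⟨d, hd, p, q + 1, by rw [pow_succ]; group⟩

/-- A normalized form of RepP: `d = tᵃ` with `a ≤ r-1`, or `d = tᵃ s tᵇ`. -/
lemma repP_cases {d : Gr12 r} (hd : RepP r d) :
    (∃ a : ℕ, a ≤ r - 1 ∧ d = t r ^ a) ∨
      (∃ a b : ℕ, 1 ≤ b ∧ b ≤ a ∧ a ≤ r - 1 ∧ d = t r ^ a * s r * t r ^ b) := by
  rcases hd with rfl | ⟨a, ha1, ha2, rfl⟩ | h
  · exact Or.inl ⟨0, Nat.zero_le _, by rw [pow_zero]⟩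
  · exact Or.inl ⟨a, ha2, rfl⟩
  · exact Or.inr h

lemma t_mul_self_pow (a : ℕ) (ha : a + 1 = r) : t r ^ a * t r = 1 := by
  rw [← pow_succ, ha, t_pow_r]

lemma mul_t_S (hr : 1 ≤ r) {g : Gr12 r} (hg : g ∈ S r) : g * t r ∈ S r := by
  obtain ⟨d, hd, p, q, rfl⟩ := hg
  rcases s_pow (r := r) q with hq | hq
  · -- g = s^p * d
    rcases repP_cases hd with ⟨a, ha, rfl⟩ | ⟨a, b, hb1, hba, ha, rfl⟩
    · -- d = t^a
      rcases Nat.lt_or_ge (a + 1) r with h | h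
      · -- rep t^(a+1)
        refine ⟨t r ^ (a + 1), Or.inr (Or.inl ⟨a + 1, by omega, by omega, rfl⟩),
          p, 0, ?_⟩
        rw [hq, pow_zero, pow_succ]
        group
      · have ha1 : a + 1 = r := by omega
        refine ⟨1, Or.inl rfl, p, 0, ?_⟩
        rw [hq, pow_zero]
        have := t_mul_self_pow a ha1
        calc s r ^ p * t r ^ a * 1 * t r = s r ^ p * (t r ^ a * t r) := by group
          _ = s r ^ p * 1 * 1 := by rw [this]; simp
    · -- d = t^a s t^b
      rcases Nat.lt_or_ge b a with h | h
      · -- b + 1 ≤ a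
        refine ⟨t r ^ a * s r * t r ^ (b + 1),
          Or.inr (Or.inr ⟨a, b + 1, by omega, by omega, ha, rfl⟩), p, 0, ?_⟩
        rw [hq, pow_zero, pow_succ]
        group
      · have hba' : b = a := by omega
        subst hba'
        rcases Nat.lt_or_ge (b + 1) r with h2 | h2
        · -- rep t^(b+1) s t^b
          refine ⟨t r ^ (b + 1) * s r * t r ^ b,
            Or.inr (Or.inr ⟨b + 1, b, hb1, by omega, by omega, rfl⟩), p + 1, 1, ?_⟩
          have core : t r ^ b * s r * t r ^ (b + 1)
              = s r * (t r ^ (b + 1) * s r * t r ^ b) * s r := by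
            rw [← identA (b + 1) b]; group
          calc s r ^ p * (t r ^ b * s r * t r ^ b) * s r ^ q * t r
              = s r ^ p * (t r ^ b * s r * t r ^ (b + 1)) := by
                rw [hq, pow_succ]; group
            _ = s r ^ p * (s r * (t r ^ (b + 1) * s r * t r ^ b) * s r) := by rw [core]
            _ = s r ^ (p + 1) * (t r ^ (b + 1) * s r * t r ^ b) * s r ^ 1 := by
                rw [pow_succ, pow_one]; group
        · -- b = a = r - 1
          have hb2 : b + 1 = r := by omega
          refine ⟨t r ^ b, Or.inr (Or.inl ⟨b, hb1, by omega, rfl⟩), p, 1, ?_⟩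
          have := t_mul_self_pow b hb2
          calc s r ^ p * (t r ^ b * s r * t r ^ b) * s r ^ q * t r
              = s r ^ p * t r ^ b * s r * (t r ^ b * t r) := by rw [hq]; group
            _ = s r ^ p * t r ^ b * s r ^ 1 := by rw [this, pow_one, mul_one]
  · -- g = s^p * d * s
    rcases repP_cases hd with ⟨a, ha, rfl⟩ | ⟨a, b, hb1, hba, ha, rfl⟩
    · rcases Nat.eq_zero_or_pos a with rfl | hapos
      · -- d = 1 : g*t = s^(p+1) * t
        rcases Nat.lt_or_ge 1 r with h | h
        · refine ⟨t r ^ 1, Or.inr (Or.inl ⟨1, le_refl 1, by omega, rfl⟩), p + 1, 0, ?_⟩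
          rw [hq, pow_zero, pow_succ, pow_one]
          group
        · -- r = 1 : t = 1
          have hr1 : r = 1 := by omega
          subst hr1
          have ht1 : t 1 = 1 := by
            have := t_pow_r (r := 1); rwa [pow_one] at this
          refine ⟨1, Or.inl rfl, p + 1, 0, ?_⟩
          rw [hq, ht1, pow_zero, pow_succ]
          group
      · -- rep t^a s t^1
        refine ⟨t r ^ a * s r * t r ^ 1,
          Or.inr (Or.inr ⟨a, 1, le_refl 1, hapos, ha, rfl⟩), p, 0, ?_⟩
        rw [hq, pow_zero, pow_one]
        group
    · -- d = t^a s t^b, g*t = s^p * (t^a s t^b s t)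
      have hid := identB (r := r) a b
      rcases Nat.lt_or_ge (a + 1) r with h | h
      · refine ⟨t r ^ (a + 1) * s r * t r ^ b,
          Or.inr (Or.inr ⟨a + 1, b, hb1, by omega, by omega, rfl⟩), p, 1, ?_⟩
        calc s r ^ p * (t r ^ a * s r * t r ^ b) * s r ^ q * t r
            = s r ^ p * (t r ^ a * s r * t r ^ b * s r * t r) := by rw [hq]; group
          _ = s r ^ p * (t r ^ (a + 1) * s r * t r ^ b * s r) := by rw [hid]
          _ = s r ^ p * (t r ^ (a + 1) * s r * t r ^ b) * s r ^ 1 := by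
              rw [pow_one]; group
      · -- a + 1 = r : t^(a+1) = 1, rep t^b
        have ha1 : a + 1 = r := by omega
        have htr : t r ^ (a + 1) = 1 := by rw [ha1, t_pow_r]
        refine ⟨t r ^ b, Or.inr (Or.inl ⟨b, hb1, by omega, rfl⟩), p + 1, 1, ?_⟩
        calc s r ^ p * (t r ^ a * s r * t r ^ b) * s r ^ q * t r
            = s r ^ p * (t r ^ a * s r * t r ^ b * s r * t r) := by rw [hq]; group
          _ = s r ^ p * (t r ^ (a + 1) * s r * t r ^ b * s r) := by rw [hid]
          _ = s r ^ p * (s r * t r ^ b * s r) := by rw [htr, one_mul]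
          _ = s r ^ (p + 1) * t r ^ b * s r ^ 1 := by rw [pow_succ, pow_one]; group

lemma mul_tpow_S (hr : 1 ≤ r) {g : Gr12 r} (hg : g ∈ S r) (n : ℕ) : g * t r ^ n ∈ S r := by
  induction n with
  | zero => simpa using hg
  | succ m ih =>
    have := mul_t_S hr ih
    rwa [pow_succ, ← mul_assoc]

lemma t_inv (hr : 1 ≤ r) : (t r)⁻¹ = t r ^ (r - 1) := by
  apply inv_eq_of_mul_eq_one_right
  rw [← pow_succ']
  have : r - 1 + 1 = r := by omega
  rw [this, t_pow_r]

lemma mem_S (hr : 1 ≤ r) (g : Gr12 r) : g ∈ S r := by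
  induction g using PresentedGroup.induction_on with
  | H z =>
    have key : ∀ w : FreeGroup (Fin 2), ∀ g ∈ S r,
        g * PresentedGroup.mk (Grels r) w ∈ S r := by
      intro w
      induction w using FreeGroup.induction_on with
      | C1 => intro g hg; simpa using hg
      | of x =>
        intro g hg
        fin_cases x
        · exact mul_s_S hg
        · exact mul_t_S hr hg
      | inv_of x _ =>
        intro g hg
        rw [map_inv]
        fin_cases x
        · show g * (s r)⁻¹ ∈ S r
          rw [s_inv]
          exact mul_s_S hg
        · show g * (t r)⁻¹ ∈ S r
          rw [t_inv hr]
          exact mul_tpow_S hr hg _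
      | mul x y ihx ihy =>
        intro g hg
        rw [map_mul, ← mul_assoc]
        exact ihy _ (ihx _ hg)
    have := key z 1 one_mem_S
    simpa using this

/-! ### Uniqueness -/

lemma cast_inj (hr : 1 ≤ r) {a b : ℕ} (ha : a ≤ r - 1) (hb : b ≤ r - 1)
    (h : (a : ZMod r) = (b : ZMod r)) : a = b := by
  haveI : NeZero r := ⟨by omega⟩
  have h2 := congrArg ZMod.val h
  rwa [ZMod.val_cast_of_lt (by omega), ZMod.val_cast_of_lt (by omega)] at h2

lemma cast_ne_zero (hr : 1 ≤ r) {a : ℕ} (ha1 : 1 ≤ a) (ha2 : a ≤ r - 1) :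
    (a : ZMod r) ≠ 0 := by
  intro h
  have : a = 0 := cast_inj hr ha2 (by omega) (by simp [h])
  omega

lemma rep_eq (hr : 1 ≤ r) {d₁ d₂ : Gr12 r} (h₁ : RepP r d₁) (h₂ : RepP r d₂)
    {i j k l : ℕ} (h : s r ^ i * d₁ * s r ^ j = s r ^ k * d₂ * s r ^ l) : d₁ = d₂ := by
  have hπ : (σ ^ i * π d₁ * σ ^ j : M r) = σ ^ k * π d₂ * σ ^ l := by
    have := congrArg (π : Gr12 r →* M r) h
    simpa [map_mul, map_pow] using this
  have A := fst_conj i j (π d₁ : M r)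
  have B := fst_conj k l (π d₂ : M r)
  rw [hπ] at A
  have hv : (π d₁ : M r).1 = (π d₂ : M r).1 ∨ (π d₁ : M r).1 = (π d₂ : M r).1.swap := by
    rcases A with A | A <;> rcases B with B | B
    · exact Or.inl (A.symm.trans B)
    · exact Or.inr (A.symm.trans B)
    · have hc := congrArg Prod.swap (A.symm.trans B)
      rw [Prod.swap_swap] at hc
      exact Or.inr hc
    · have hc := congrArg Prod.swap (A.symm.trans B)
      rw [Prod.swap_swap, Prod.swap_swap] at hc
      exact Or.inl hc
  clear A B hπ h
  rcases repP_cases h₁ with ⟨a, ha, rfl⟩ | ⟨a, b, hb1, hba, ha, rfl⟩ <;>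
    rcases repP_cases h₂ with ⟨a', ha', rfl⟩ | ⟨a', b', hb1', hba', ha', rfl⟩
  · -- t^a vs t^a'
    rw [π_tpow, π_tpow] at hv
    simp only [Prod.swap_prod_mk, Prod.mk.injEq] at hv
    rcases hv with ⟨h1, _⟩ | ⟨h1, h2⟩
    · rw [cast_inj hr ha ha' h1]
    · have e1 : a = 0 := cast_inj hr ha (by omega) (by rw [Nat.cast_zero]; exact h1)
      have e2 : a' = 0 := cast_inj hr ha' (by omega) (by rw [Nat.cast_zero]; exact h2.symm)
      rw [e1, e2]
  · -- t^a vs t^a' s t^b'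
    rw [π_tpow, π_tst] at hv
    simp only [Prod.swap_prod_mk, Prod.mk.injEq] at hv
    rcases hv with ⟨_, h2⟩ | ⟨_, h2⟩
    · exact absurd h2.symm (cast_ne_zero hr hb1' (by omega))
    · exact absurd h2.symm (cast_ne_zero hr (by omega : 1 ≤ a') ha')
  · -- t^a s t^b vs t^a'
    rw [π_tpow, π_tst] at hv
    simp only [Prod.swap_prod_mk, Prod.mk.injEq] at hv
    rcases hv with ⟨_, h2⟩ | ⟨h1, _⟩
    · exact absurd h2 (cast_ne_zero hr hb1 (by omega))
    · exact absurd h1 (cast_ne_zero hr (by omega : 1 ≤ a) ha)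
  · -- t^a s t^b vs t^a' s t^b'
    rw [π_tst, π_tst] at hv
    simp only [Prod.swap_prod_mk, Prod.mk.injEq] at hv
    rcases hv with ⟨h1, h2⟩ | ⟨h1, h2⟩
    · rw [cast_inj hr ha ha' h1, cast_inj hr (by omega) (by omega) h2]
    · have e1 : a = b' := cast_inj hr ha (by omega) h1
      have e2 : b = a' := cast_inj hr (by omega) ha' h2
      have : a = a' ∧ b = b' := by omega
      rw [this.1, this.2]

end Gr12Aux

open Gr12Aux in
/-- The elements 1, tᵃ (1 ≤ a ≤ r−1), and tᵃ s tᵇ (1 ≤ b ≤ a ≤ r−1) form a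
complete set of representatives of the ⟨s⟩-⟨s⟩ double cosets in G(r,1,2). -/
theorem sDoubleCoset_reps (r : ℕ) (hr : 1 ≤ r) (g : Gr12 r) :
    ∃! d : Gr12 r,
      (d = 1 ∨ (∃ a : ℕ, 1 ≤ a ∧ a ≤ r - 1 ∧ d = t r ^ a) ∨
        (∃ a b : ℕ, 1 ≤ b ∧ b ≤ a ∧ a ≤ r - 1 ∧ d = t r ^ a * s r * t r ^ b)) ∧
      g ∈ sDoubleCoset r d := by
  obtain ⟨d, hd, hmem⟩ := mem_S hr g
  refine ⟨d, ⟨hd, hmem⟩, ?_⟩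
  rintro d' ⟨hd', hmem'⟩
  obtain ⟨i, j, hg⟩ := hmem'
  obtain ⟨k, l, hg'⟩ := hmem
  exact rep_eq hr hd' hd (hg.symm.trans hg')
end

section
/- In the group G(r,1,2) = ⟨s, t ∣ s² = t^r = 1, stst = tsts⟩, every element can be written uniquely in the form t^a s t^b or t^a s t^b s with 0 ≤ a, b ≤ r−1, where we interpret t^a s t^0 = t^a s and t^a s t^0 s = t^a (so the 2r² expressions t^a s t^b and t^a s t^b s, for 0 ≤ a, b ≤ r−1, enumerate each group element exactly once). -/
namespace G12aux

variable {r : ℕ}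

lemma rel_one {w : FreeGroup (Fin 2)} (hw : w ∈ Grels r) : PresentedGroup.mk (Grels r) w = 1 :=
  (QuotientGroup.eq_one_iff w).mpr (Subgroup.subset_normalClosure hw)

lemma s_def : s r = PresentedGroup.mk (Grels r) (FreeGroup.of 0) := rfl
lemma t_def : t r = PresentedGroup.mk (Grels r) (FreeGroup.of 1) := rfl

lemma s_sq : s r * s r = 1 := by
  have := rel_one (r := r) (Set.mem_insert _ _)
  simpa [s_def, sq] using this

lemma t_pow_r : t r ^ r = 1 := by
  have := rel_one (r := r) (Set.mem_insert_of_mem _ (Set.mem_insert _ _))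
  simpa [t_def] using this

lemma braid : s r * t r * s r * t r = t r * s r * t r * s r := by
  have := rel_one (r := r) (show _ ∈ Grels r from Set.mem_insert_of_mem _
    (Set.mem_insert_of_mem _ rfl))
  have h : PresentedGroup.mk (Grels r)
      ((FreeGroup.of 0 * FreeGroup.of 1 * FreeGroup.of 0 * FreeGroup.of 1) *
      (FreeGroup.of 1 * FreeGroup.of 0 * FreeGroup.of 1 * FreeGroup.of 0)⁻¹) = 1 := this
  simp only [map_mul, map_inv] at h
  rw [mul_inv_eq_one] at h
  simpa [s_def, t_def] using h

lemma s_inv : (s r)⁻¹ = s r := by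
  rw [inv_eq_iff_mul_eq_one]; exact s_sq

lemma comm_tsts : Commute (t r) (s r * t r * s r) := by
  unfold Commute SemiconjBy
  calc t r * (s r * t r * s r) = t r * s r * t r * s r := by group
    _ = s r * t r * s r * t r := braid.symm
    _ = (s r * t r * s r) * t r := by group

lemma conj_pow (n : ℕ) : s r * t r ^ n * s r = (s r * t r * s r) ^ n := by
  induction n with
  | zero => simpa using s_sq
  | succ n ih =>
    rw [pow_succ, pow_succ, ← ih]
    calc s r * (t r ^ n * t r) * s r
        = (s r * t r ^ n) * (s r * s r) * (t r * s r) := by rw [s_sq]; group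
      _ = s r * t r ^ n * s r * (s r * t r * s r) := by group

lemma key (a b : ℕ) : s r * (t r ^ a * s r * t r ^ b) = t r ^ b * s r * t r ^ a * s r := by
  have h1 : s r * t r ^ a * s r = (s r * t r * s r) ^ a := conj_pow a
  have h2 : Commute (t r ^ b) ((s r * t r * s r) ^ a) := (comm_tsts.pow_pow b a)
  calc s r * (t r ^ a * s r * t r ^ b) = (s r * t r ^ a * s r) * t r ^ b := by group
    _ = (s r * t r * s r) ^ a * t r ^ b := by rw [h1]
    _ = t r ^ b * (s r * t r * s r) ^ a := h2.symm.eq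
    _ = t r ^ b * (s r * t r ^ a * s r) := by rw [h1]
    _ = t r ^ b * s r * t r ^ a * s r := by group

lemma t_pow_mod (n : ℕ) (hr : 1 ≤ r) : t r ^ n = t r ^ (n % r) := by
  conv_lhs => rw [← Nat.mod_add_div n r]
  rw [pow_add, pow_mul, t_pow_r, one_pow, mul_one]

/-- normal form -/
def nf (r : ℕ) (x : Fin r × Fin r × Bool) : Gr12 r :=
  t r ^ (x.1 : ℕ) * s r * t r ^ (x.2.1 : ℕ) * (if x.2.2 then s r else 1)

lemma nf_ff (a b : Fin r) : nf r (a, b, false) = t r ^ (a : ℕ) * s r * t r ^ (b : ℕ) := by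
  simp [nf]

lemma nf_tt (a b : Fin r) : nf r (a, b, true) = t r ^ (a : ℕ) * s r * t r ^ (b : ℕ) * s r := by
  simp [nf]

variable (hr : 1 ≤ r)

lemma nf_mul_t (x : Fin r × Fin r × Bool) (hr : 1 ≤ r) :
    ∃ y, nf r x * t r = nf r y := by
  haveI : NeZero r := ⟨by omega⟩
  obtain ⟨a, b, u⟩ := x
  cases u
  · refine ⟨(a, b + 1, false), ?_⟩
    rw [nf_ff, nf_ff]
    have : ((b + 1 : Fin r) : ℕ) = ((b : ℕ) + 1) % r := by
      simp [Fin.add_def]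
    rw [this, ← t_pow_mod _ hr, pow_succ]
    group
  · refine ⟨(a + 1, b, true), ?_⟩
    rw [nf_tt, nf_tt]
    have hv : ((a + 1 : Fin r) : ℕ) = ((a : ℕ) + 1) % r := by
      simp [Fin.add_def]
    rw [hv, ← t_pow_mod _ hr, pow_succ]
    -- goal: t^a * s * t^b * s * t = t^a * t * s * t^b * s
    calc t r ^ (a:ℕ) * s r * t r ^ (b:ℕ) * s r * t r
        = t r ^ (a:ℕ) * s r * t r ^ (b:ℕ) * s r * t r * (s r * s r) := by rw [s_sq]; group
      _ = t r ^ (a:ℕ) * s r * (t r ^ (b:ℕ) * (s r * t r * s r)) * s r := by group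
      _ = t r ^ (a:ℕ) * s r * ((s r * t r * s r) * t r ^ (b:ℕ)) * s r := by
            rw [(comm_tsts.symm.pow_right (b:ℕ)).eq]
      _ = t r ^ (a:ℕ) * (s r * s r) * t r * s r * t r ^ (b:ℕ) * s r := by group
      _ = t r ^ (a:ℕ) * t r * s r * t r ^ (b:ℕ) * s r := by rw [s_sq]; group

lemma nf_mul_s (x : Fin r × Fin r × Bool) : ∃ y, nf r x * s r = nf r y := by
  obtain ⟨a, b, u⟩ := x
  cases u
  · exact ⟨(a, b, true), by rw [nf_ff, nf_tt]⟩
  · refine ⟨(a, b, false), ?_⟩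
    rw [nf_ff, nf_tt]
    calc t r ^ (a:ℕ) * s r * t r ^ (b:ℕ) * s r * s r
        = t r ^ (a:ℕ) * s r * t r ^ (b:ℕ) * (s r * s r) := by group
      _ = t r ^ (a:ℕ) * s r * t r ^ (b:ℕ) := by rw [s_sq]; group

lemma nf_one (hr : 1 ≤ r) : ∃ y, (1 : Gr12 r) = nf r y := by
  haveI : NeZero r := ⟨by omega⟩
  refine ⟨(0, 0, true), ?_⟩
  rw [nf_tt]
  simp [s_sq]

lemma nf_mul_tpow (g : Gr12 r) (hg : ∃ x, g = nf r x) (n : ℕ) (hr : 1 ≤ r) :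
    ∃ y, g * t r ^ n = nf r y := by
  induction n with
  | zero => simpa using hg
  | succ n ih =>
    obtain ⟨y, hy⟩ := ih
    obtain ⟨z, hz⟩ := nf_mul_t y hr
    exact ⟨z, by rw [pow_succ, ← mul_assoc, hy, hz]⟩

lemma nf_mul_nf (g : Gr12 r) (hg : ∃ x, g = nf r x) (y : Fin r × Fin r × Bool) (hr : 1 ≤ r) :
    ∃ z, g * nf r y = nf r z := by
  obtain ⟨a, b, u⟩ := y
  obtain ⟨y1, hy1⟩ := nf_mul_tpow g hg (a : ℕ) hr
  obtain ⟨y2, hy2⟩ : ∃ y2, g * t r ^ (a:ℕ) * s r = nf r y2 := by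
    obtain ⟨z, hz⟩ := nf_mul_s y1; exact ⟨z, by rw [hy1, hz]⟩
  obtain ⟨y3, hy3⟩ := nf_mul_tpow (g * t r ^ (a:ℕ) * s r) ⟨y2, hy2⟩ (b : ℕ) hr
  cases u
  · exact ⟨y3, by rw [nf_ff, ← hy3]; group⟩
  · obtain ⟨y4, hy4⟩ := nf_mul_s y3
    exact ⟨y4, by rw [nf_tt, ← hy4, ← hy3]; group⟩

lemma surj (hr : 1 ≤ r) (g : Gr12 r) : ∃ x, g = nf r x := by
  haveI : NeZero r := ⟨by omega⟩
  suffices main : ∀ w : FreeGroup (Fin 2), ∃ x, PresentedGroup.mk (Grels r) w = nf r x by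
    exact PresentedGroup.induction_on (C := fun g => ∃ x, g = nf r x) g main
  intro w
  induction w using FreeGroup.induction_on with
  | C1 => simpa using nf_one hr
  | of i =>
    fin_cases i
    · exact ⟨(0, 0, false), by rw [nf_ff]; show s r = _; simp⟩
    · refine ⟨((1 : Fin r), 0, true), ?_⟩
      show t r = _
      rw [nf_tt]
      have h1 : ((1 : Fin r) : ℕ) = 1 % r := Fin.val_one' r
      rw [h1, ← t_pow_mod _ hr, pow_one]
      simp [s_sq, mul_assoc]
  | inv_of i _ =>
    fin_cases i
    · refine ⟨(0, 0, false), ?_⟩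
      show (s r)⁻¹ = _
      rw [nf_ff, s_inv]; simp
    · refine ⟨((⟨r - 1, by omega⟩ : Fin r), 0, true), ?_⟩
      show (t r)⁻¹ = _
      rw [nf_tt]
      have h2 : t r ^ ((⟨r - 1, by omega⟩ : Fin r) : ℕ) * s r * t r ^ ((0 : Fin r) : ℕ) * s r
          = t r ^ (r - 1) := by simp [s_sq, mul_assoc]
      rw [h2, inv_eq_iff_mul_eq_one, ← pow_succ']
      have h3 : r - 1 + 1 = r := by omega
      rw [h3, t_pow_r]
  | mul x y hx hy =>
    rw [map_mul]
    obtain ⟨b, hb⟩ := hy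
    rw [hb]
    exact nf_mul_nf _ hx b hr

/-! ### Injectivity via a permutation representation -/

def permS (r : ℕ) : Equiv.Perm (ZMod r × ZMod r) := Equiv.prodComm _ _
def permT (r : ℕ) : Equiv.Perm (ZMod r × ZMod r) := Equiv.addRight ((1, 0) : ZMod r × ZMod r)

abbrev K (r : ℕ) := Equiv.Perm (ZMod r × ZMod r) × Multiplicative (ZMod 2)

def fgen (r : ℕ) : Fin 2 → K r := fun i =>
  if i = 0 then (permS r, Multiplicative.ofAdd 1) else (permT r, 1)

lemma fgen0 : fgen r 0 = (permS r, Multiplicative.ofAdd 1) := rfl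
lemma fgen1 : fgen r 1 = (permT r, 1) := rfl

lemma permT_pow (n : ℕ) (x : ZMod r × ZMod r) :
    ((permT r) ^ n) x = (x.1 + n, x.2) := by
  induction n with
  | zero => simp
  | succ n ih =>
    rw [pow_succ', Equiv.Perm.mul_apply]
    simp only [permT, Equiv.coe_addRight] at ih ⊢
    rw [ih]
    refine Prod.ext ?_ ?_ <;> push_cast <;> simp [add_assoc]

lemma permS_sq : permS r * permS r = 1 := by
  refine Equiv.ext fun x => ?_
  simp [permS, Equiv.Perm.mul_apply]

lemma permT_pow_r : permT r ^ r = 1 := by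
  refine Equiv.ext fun x => ?_
  rw [permT_pow]
  simp

lemma perm_braid : permS r * permT r * permS r * permT r
    = permT r * permS r * permT r * permS r := by
  refine Equiv.ext fun x => ?_
  simp only [permS, permT, Equiv.Perm.mul_apply, Equiv.coe_addRight, Equiv.prodComm_apply]
  refine Prod.ext ?_ ?_ <;> simp

lemma hrels : ∀ w ∈ Grels r, FreeGroup.lift (fgen r) w = 1 := by
  intro w hw
  rcases hw with h | h | h
  · subst h
    rw [map_pow, FreeGroup.lift_apply_of, fgen0]
    refine Prod.ext ?_ ?_
    · show permS r ^ 2 = 1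
      rw [sq]; exact permS_sq
    · show Multiplicative.ofAdd (1 : ZMod 2) ^ 2 = 1
      decide
  · subst h
    rw [map_pow, FreeGroup.lift_apply_of, fgen1]
    refine Prod.ext ?_ ?_
    · show permT r ^ r = 1
      exact permT_pow_r
    · show (1 : Multiplicative (ZMod 2)) ^ r = 1
      exact one_pow r
  · rw [Set.mem_singleton_iff] at h
    subst h
    simp only [map_mul, map_inv, FreeGroup.lift_apply_of, fgen0, fgen1]
    rw [mul_inv_eq_one]
    refine Prod.ext ?_ ?_
    · show permS r * permT r * permS r * permT r = permT r * permS r * permT r * permS r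
      exact perm_braid
    · show Multiplicative.ofAdd (1 : ZMod 2) * 1 * Multiplicative.ofAdd 1 * 1
        = 1 * Multiplicative.ofAdd 1 * 1 * Multiplicative.ofAdd 1
      group

def phi (r : ℕ) : Gr12 r →* K r := PresentedGroup.toGroup (hrels (r := r))

lemma phi_s : phi r (s r) = (permS r, Multiplicative.ofAdd 1) :=
  PresentedGroup.toGroup.of _

lemma phi_t : phi r (t r) = (permT r, 1) :=
  PresentedGroup.toGroup.of _

lemma phi_nf_snd (x : Fin r × Fin r × Bool) :
    (phi r (nf r x)).2 = if x.2.2 then 1 else Multiplicative.ofAdd 1 := by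
  obtain ⟨a, b, u⟩ := x
  have h : (phi r (nf r (a, b, u))).2
      = ((phi r (t r)).2) ^ (a:ℕ) * (phi r (s r)).2 * ((phi r (t r)).2) ^ (b:ℕ)
        * (if u then (phi r (s r)).2 else 1) := by
    simp only [nf, map_mul, map_pow, Prod.snd_mul, Prod.pow_snd]
    cases u <;> simp
  rw [h, phi_s, phi_t]
  cases u <;> simp <;> decide

lemma phi_nf_fst (x : Fin r × Fin r × Bool) :
    ((phi r (nf r x)).1) ((0 : ZMod r), (0 : ZMod r))
      = (((x.1 : ℕ) : ZMod r), ((x.2.1 : ℕ) : ZMod r)) := by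
  obtain ⟨a, b, u⟩ := x
  have h : (phi r (nf r (a, b, u))).1
      = (permT r) ^ (a:ℕ) * permS r * (permT r) ^ (b:ℕ)
        * (if u then permS r else 1) := by
    simp only [nf, map_mul, map_pow, Prod.fst_mul, Prod.pow_fst, phi_s, phi_t]
    cases u <;> simp [phi_s]
  rw [h]
  have hu : ((if u then permS r else 1 : Equiv.Perm (ZMod r × ZMod r)))
      ((0 : ZMod r), (0 : ZMod r)) = ((0 : ZMod r), (0 : ZMod r)) := by
    cases u <;> simp [permS]
  simp only [Equiv.Perm.mul_apply, hu, permT_pow]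
  simp [permS]

lemma nf_inj (hr : 1 ≤ r) : Function.Injective (nf r) := by
  intro x y hxy
  haveI : NeZero r := ⟨by omega⟩
  have h2 := congrArg (fun g => (phi r g).2) hxy
  have h1 := congrArg (fun g => ((phi r g).1) ((0 : ZMod r), (0 : ZMod r))) hxy
  rw [phi_nf_snd, phi_nf_snd] at h2
  rw [phi_nf_fst, phi_nf_fst] at h1
  obtain ⟨a1, b1, u1⟩ := x
  obtain ⟨a2, b2, u2⟩ := y
  rw [Prod.ext_iff] at h1
  simp only [Prod.mk.injEq] at h1 ⊢
  have hu : u1 = u2 := by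
    cases u1 <;> cases u2 <;> simp_all <;> exact absurd h2 (by decide)
  refine ⟨?_, ?_, hu⟩
  · have h := congrArg ZMod.val h1.1
    rwa [ZMod.val_cast_of_lt a1.isLt, ZMod.val_cast_of_lt a2.isLt, Fin.val_eq_val] at h
  · have h := congrArg ZMod.val h1.2
    rwa [ZMod.val_cast_of_lt b1.isLt, ZMod.val_cast_of_lt b2.isLt, Fin.val_eq_val] at h

end G12aux

/-- Every element of G(r,1,2) is expressed exactly once among the 2r²
expressions tᵃ s tᵇ and tᵃ s tᵇ s with 0 ≤ a, b ≤ r−1. -/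
theorem normal_form (r : ℕ) (hr : 1 ≤ r) (g : Gr12 r) :
    ∃! x : Fin r × Fin r × Bool,
      g = t r ^ (x.1 : ℕ) * s r * t r ^ (x.2.1 : ℕ) *
            (if x.2.2 then s r else 1) := by
  obtain ⟨x, hx⟩ := G12aux.surj hr g
  refine ⟨x, hx, fun y hy => ?_⟩
  exact G12aux.nf_inj hr ((hy.symm.trans hx : G12aux.nf r y = G12aux.nf r x))
end
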